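/- arXiv:2310.18701 — 3 statements merged into one kernel-verified Lean document; each statement's English description precedes it below -/
import Mathlib

section
/- Let μ: ℝ → ℝ be L-Lipschitz and monotonically increasing. Let V be a positive definite d×d matrix, γ ≥ 0, and θ̂, θ*, θ̃ ∈ ℝᵈ with ‖θ* - θ̂‖_V² ≤ γ and ‖θ̃ - θ̂‖_V² ≤ γ. Let x̃, x ∈ ℝᵈ satisfy ⟨x, θ̃⟩ ≥ ⟨x̃, θ*⟩. Then μ(⟨x̃, θ*⟩) - μ(⟨x, θ*⟩) ≤ 2L·√γ·‖x‖_{V⁻¹}. -/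
open Matrix

lemma cs_psd {d : ℕ} {M : Matrix (Fin d) (Fin d) ℝ} (hM : M.PosSemidef)
    (u v : Fin d → ℝ) :
    (u ⬝ᵥ M.mulVec v) ^ 2 ≤ (u ⬝ᵥ M.mulVec u) * (v ⬝ᵥ M.mulVec v) := by
  have ht : Mᵀ = M := IsSymm.eq (by simpa using hM.isHermitian)
  have hsymm : ∀ a b : Fin d → ℝ, a ⬝ᵥ M.mulVec b = b ⬝ᵥ M.mulVec a := by
    intro a b
    rw [dotProduct_mulVec, ← mulVec_transpose, ht, dotProduct_comm]
  have key : ∀ t : ℝ, 0 ≤ (v ⬝ᵥ M.mulVec v) * (t * t) + (2 * (u ⬝ᵥ M.mulVec v)) * t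
      + (u ⬝ᵥ M.mulVec u) := by
    intro t
    have h0 := hM.dotProduct_mulVec_nonneg (u + t • v)
    simp only [star_trivial] at h0
    have he : (u + t • v) ⬝ᵥ M.mulVec (u + t • v)
        = (v ⬝ᵥ M.mulVec v) * (t * t) + (2 * (u ⬝ᵥ M.mulVec v)) * t + (u ⬝ᵥ M.mulVec u) := by
      simp only [mulVec_add, mulVec_smul, add_dotProduct, dotProduct_add,
        dotProduct_smul, smul_dotProduct, smul_eq_mul, hsymm v u]
      ring
    linarith [he ▸ h0]
  have hd := discrim_le_zero key
  rw [discrim] at hd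
  nlinarith [hd]

theorem instantaneous_regret_bound
    (d : ℕ) (hd : 0 < d)
    (μ : ℝ → ℝ) (L : ℝ) (hL : 0 ≤ L)
    (hLip : ∀ a b : ℝ, |μ a - μ b| ≤ L * |a - b|)
    (hmono : Monotone μ)
    (V : Matrix (Fin d) (Fin d) ℝ) (hV : V.PosDef)
    (γ : ℝ) (hγ : 0 ≤ γ)
    (θh θs θt : Fin d → ℝ)
    (hθs : (θs - θh) ⬝ᵥ V.mulVec (θs - θh) ≤ γ)
    (hθt : (θt - θh) ⬝ᵥ V.mulVec (θt - θh) ≤ γ)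
    (xt x : Fin d → ℝ)
    (hopt : xt ⬝ᵥ θs ≤ x ⬝ᵥ θt) :
    μ (xt ⬝ᵥ θs) - μ (x ⬝ᵥ θs) ≤
      2 * L * Real.sqrt γ * Real.sqrt (x ⬝ᵥ V⁻¹.mulVec x) := by
  have ht : Vᵀ = V := IsSymm.eq (by simpa using hV.isHermitian)
  have hdet : IsUnit V.det := hV.det_pos.ne'.isUnit
  set u := θt - θh with hu
  set w := θs - θh with hw
  set y := θt - θs with hy
  have hpsd := hV.posSemidef
  -- bound y V y ≤ 4γ
  have hsymm : ∀ a b : Fin d → ℝ, a ⬝ᵥ V.mulVec b = b ⬝ᵥ V.mulVec a := by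
    intro a b
    rw [dotProduct_mulVec, ← mulVec_transpose, ht, dotProduct_comm]
  have huw : (u ⬝ᵥ V.mulVec w) ^ 2 ≤ γ * γ := by
    have := cs_psd hpsd u w
    have h1 : 0 ≤ u ⬝ᵥ V.mulVec u := by simpa using hpsd.dotProduct_mulVec_nonneg u
    have h2 : 0 ≤ w ⬝ᵥ V.mulVec w := by simpa using hpsd.dotProduct_mulVec_nonneg w
    nlinarith
  have huwγ : -γ ≤ u ⬝ᵥ V.mulVec w := by nlinarith
  have hyVy : y ⬝ᵥ V.mulVec y ≤ 4 * γ := by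
    have he : y ⬝ᵥ V.mulVec y
        = u ⬝ᵥ V.mulVec u - 2 * (u ⬝ᵥ V.mulVec w) + w ⬝ᵥ V.mulVec w := by
      have : y = u - w := by rw [hy, hu, hw]; abel
      rw [this]
      simp only [mulVec_sub, sub_dotProduct, dotProduct_sub, hsymm w u]
      ring
    rw [he]; linarith
  have hyVy0 : 0 ≤ y ⬝ᵥ V.mulVec y := by simpa using hpsd.dotProduct_mulVec_nonneg y
  -- Cauchy–Schwarz mixed
  set z := V⁻¹.mulVec x with hz
  have hzV : ∀ c : Fin d → ℝ, z ⬝ᵥ V.mulVec c = x ⬝ᵥ c := by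
    intro c
    rw [dotProduct_mulVec, ← mulVec_transpose, ht, hz, mulVec_mulVec,
      mul_nonsing_inv _ hdet, one_mulVec]
  have hcs := cs_psd hpsd z y
  rw [hzV y, hzV z] at hcs
  have hx0 : 0 ≤ x ⬝ᵥ V⁻¹.mulVec x := by simpa using hpsd.inv.dotProduct_mulVec_nonneg x
  have hcs' : (x ⬝ᵥ y) ^ 2 ≤ (x ⬝ᵥ V⁻¹.mulVec x) * (4 * γ) := by
    have : x ⬝ᵥ z = x ⬝ᵥ V⁻¹.mulVec x := by rw [hz]
    nlinarith [hcs]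
  have habs : |x ⬝ᵥ y| ≤ 2 * Real.sqrt γ * Real.sqrt (x ⬝ᵥ V⁻¹.mulVec x) := by
    have h1 : |x ⬝ᵥ y| = Real.sqrt ((x ⬝ᵥ y) ^ 2) := (Real.sqrt_sq_eq_abs _).symm
    rw [h1]
    calc Real.sqrt ((x ⬝ᵥ y) ^ 2) ≤ Real.sqrt ((x ⬝ᵥ V⁻¹.mulVec x) * (4 * γ)) :=
          Real.sqrt_le_sqrt hcs'
      _ = 2 * Real.sqrt γ * Real.sqrt (x ⬝ᵥ V⁻¹.mulVec x) := by
          rw [Real.sqrt_mul hx0, show (4:ℝ) * γ = 2^2 * γ by norm_num,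
            Real.sqrt_mul (by positivity), Real.sqrt_sq (by norm_num)]
          ring
  -- monotone + Lipschitz
  have hm : μ (xt ⬝ᵥ θs) ≤ μ (x ⬝ᵥ θt) := hmono hopt
  have hlip : μ (x ⬝ᵥ θt) - μ (x ⬝ᵥ θs) ≤ L * |x ⬝ᵥ y| := by
    have h2 : x ⬝ᵥ θt - x ⬝ᵥ θs = x ⬝ᵥ y := by rw [hy, dotProduct_sub]
    calc μ (x ⬝ᵥ θt) - μ (x ⬝ᵥ θs) ≤ |μ (x ⬝ᵥ θt) - μ (x ⬝ᵥ θs)| := le_abs_self _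
      _ ≤ L * |x ⬝ᵥ θt - x ⬝ᵥ θs| := hLip _ _
      _ = L * |x ⬝ᵥ y| := by rw [h2]
  have := mul_le_mul_of_nonneg_left habs hL
  nlinarith [this]
end

section
/- Let X₁,…,Xₙ be random variables adapted to a filtration with E[Xᵢ | F_{i-1}] = 0 and E[|Xᵢ|^(1+ε) | F_{i-1}] ≤ v for ε ∈ (0,1], v > 0. Let α₁,…,αₙ ∈ ℝ, C > 0, and Zᵢ = Xᵢ·𝟙_{|αᵢXᵢ| ≤ C·‖α‖_{1+ε}}. Then |Σᵢ E[αᵢZᵢ | F_{i-1}]| ≤ v·C^(-ε)·‖α‖_{1+ε}, where ‖α‖_{1+ε} = (Σᵢ|αᵢ|^(1+ε))^(1/(1+ε)). -/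
open MeasureTheory Finset

theorem truncated_conditional_bias_bound
    {Ω : Type*} {m0 : MeasurableSpace Ω} (μ : Measure Ω) [IsProbabilityMeasure μ]
    (𝓕 : Filtration ℕ m0)
    (n : ℕ) (hn : 0 < n)
    (ε v C : ℝ) (hε : ε ∈ Set.Ioc (0 : ℝ) 1) (hv : 0 < v) (hC : 0 < C)
    (X : ℕ → Ω → ℝ) (α : ℕ → ℝ)
    (hmeas : ∀ i, Measurable (X i))
    (hint : ∀ i ∈ Finset.Icc 1 n, Integrable (X i) μ)
    (hmomint : ∀ i ∈ Finset.Icc 1 n, Integrable (fun ω => |X i ω| ^ (1 + ε)) μ)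
    (hzero : ∀ i ∈ Finset.Icc 1 n, μ[X i | 𝓕 (i - 1)] =ᵐ[μ] 0)
    (hmom : ∀ i ∈ Finset.Icc 1 n,
      ∀ᵐ ω ∂μ, (μ[fun ω' => |X i ω'| ^ (1 + ε) | 𝓕 (i - 1)]) ω ≤ v)
    (A : ℝ) (hA : A = (∑ i ∈ Finset.Icc 1 n, |α i| ^ (1 + ε)) ^ (1 / (1 + ε)))
    (Z : ℕ → Ω → ℝ)
    (hZ : ∀ i ω, Z i ω = if |α i * X i ω| ≤ C * A then X i ω else 0) :
    ∀ᵐ ω ∂μ,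
      |∑ i ∈ Finset.Icc 1 n, (μ[fun ω' => α i * Z i ω' | 𝓕 (i - 1)]) ω| ≤
        v * C ^ (-ε) * A := by
  obtain ⟨hε0, hε1⟩ := hε
  have hεp : (0:ℝ) < 1 + ε := by linarith
  have hSnn : (0:ℝ) ≤ ∑ i ∈ Finset.Icc 1 n, |α i| ^ (1 + ε) :=
    Finset.sum_nonneg fun i _ => Real.rpow_nonneg (abs_nonneg _) _
  have hA0 : 0 ≤ A := by rw [hA]; exact Real.rpow_nonneg hSnn _
  rcases eq_or_lt_of_le hA0 with hAz | hApos
  · -- degenerate case A = 0 : all α i = 0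
    have hS : ∑ i ∈ Finset.Icc 1 n, |α i| ^ (1 + ε) = 0 := by
      rcases hSnn.eq_or_lt with h | h
      · exact h.symm
      · exfalso
        have hpos := Real.rpow_pos_of_pos h (1 / (1 + ε))
        rw [← hA, ← hAz] at hpos
        exact lt_irrefl 0 hpos
    have hα : ∀ i ∈ Finset.Icc 1 n, α i = 0 := by
      intro i hi
      have h0 := (Finset.sum_eq_zero_iff_of_nonneg
        fun j _ => Real.rpow_nonneg (abs_nonneg _) _).1 hS i hi
      by_contra hne
      have habs : 0 < |α i| := abs_pos.2 hne
      exact absurd h0 (ne_of_gt (Real.rpow_pos_of_pos habs _))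
    have hcz : ∀ i ∈ Finset.Icc 1 n,
        μ[fun ω' => α i * Z i ω' | 𝓕 (i - 1)] =ᵐ[μ] 0 := by
      intro i hi
      have he : (fun ω' => α i * Z i ω') = (0 : Ω → ℝ) :=
        funext fun ω => by rw [hα i hi]; ring_nf; rfl
      rw [he, condExp_zero]
    have hall : ∀ᵐ ω ∂μ, ∀ i ∈ Finset.Icc 1 n,
        (μ[fun ω' => α i * Z i ω' | 𝓕 (i - 1)]) ω = 0 :=
      (Filter.eventually_all_finset _).2 hcz
    filter_upwards [hall] with ω hω
    rw [Finset.sum_eq_zero hω, abs_zero, ← hAz, mul_zero]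
  · -- main case A > 0
    set B := C * A with hBdef
    have hB : 0 < B := mul_pos hC hApos
    have hBε : 0 < B ^ ε := Real.rpow_pos_of_pos hB ε
    set c : ℕ → ℝ := fun i => |α i| ^ (1 + ε) / B ^ ε with hcdef
    have hc0 : ∀ i, 0 ≤ c i := fun i =>
      div_nonneg (Real.rpow_nonneg (abs_nonneg _) _) hBε.le
    -- measurability and integrability of Z
    have hZm : ∀ i, Measurable (Z i) := by
      intro i
      have he : Z i = fun ω => if |α i * X i ω| ≤ B then X i ω else 0 :=
        funext fun ω => hZ i ω
      rw [he]
      exact Measurable.ite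
        (measurableSet_le ((measurable_const.mul (hmeas i)).abs) measurable_const)
        (hmeas i) measurable_const
    have hZint : ∀ i ∈ Finset.Icc 1 n, Integrable (Z i) μ := by
      intro i hi
      refine (hint i hi).mono (hZm i).aestronglyMeasurable (ae_of_all _ fun ω => ?_)
      rw [hZ i ω]
      simp only [Real.norm_eq_abs]
      split_ifs
      · exact le_rfl
      · simp [abs_nonneg]
    -- the tail term T
    set T : ℕ → Ω → ℝ := fun i ω => α i * X i ω - α i * Z i ω with hTdef
    have hTint : ∀ i ∈ Finset.Icc 1 n, Integrable (T i) μ := fun i hi =>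
      ((hint i hi).const_mul (α i)).sub ((hZint i hi).const_mul (α i))
    -- pointwise bound on |T|
    have hTb : ∀ i, ∀ ω, |T i ω| ≤ c i * |X i ω| ^ (1 + ε) := by
      intro i ω
      have hcg : c i * |X i ω| ^ (1 + ε) = |α i * X i ω| ^ (1 + ε) / B ^ ε := by
        rw [abs_mul, Real.mul_rpow (abs_nonneg _) (abs_nonneg _), hcdef]
        ring
      rw [hcg]
      simp only [hTdef, hZ i ω]
      split_ifs with h
      · simp only [sub_self, abs_zero]
        exact div_nonneg (Real.rpow_nonneg (abs_nonneg _) _) hBε.le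
      · push_neg at h
        rw [mul_zero, sub_zero]
        have hax : 0 < |α i * X i ω| := lt_trans hB h
        rw [le_div_iff₀ hBε]
        calc |α i * X i ω| * B ^ ε
            ≤ |α i * X i ω| * |α i * X i ω| ^ ε := by
              exact mul_le_mul_of_nonneg_left
                (Real.rpow_le_rpow hB.le h.le hε0.le) (abs_nonneg _)
          _ = |α i * X i ω| ^ (1 + ε) := by
              rw [Real.rpow_add hax, Real.rpow_one]
    -- per-index conditional expectation bound
    have hkey : ∀ i ∈ Finset.Icc 1 n,
        ∀ᵐ ω ∂μ, |(μ[fun ω' => α i * Z i ω' | 𝓕 (i - 1)]) ω| ≤ c i * v := by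
      intro i hi
      have hZi : Integrable (fun ω' => α i * Z i ω') μ := (hZint i hi).const_mul (α i)
      have hXi : Integrable (fun ω' => α i * X i ω') μ := (hint i hi).const_mul (α i)
      have hTi := hTint i hi
      have hgi : Integrable (fun ω => c i * |X i ω| ^ (1 + ε)) μ :=
        (hmomint i hi).const_mul (c i)
      -- condexp of α•X is 0
      have hXz : μ[fun ω' => α i * X i ω' | 𝓕 (i - 1)] =ᵐ[μ] 0 := by
        have h1 : (fun ω' => α i * X i ω') = α i • X i := by
          funext ω; simp [smul_eq_mul]
        rw [h1]
        refine (condExp_smul (α i) (X i) (𝓕 (i - 1))).trans ?_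
        filter_upwards [hzero i hi] with ω hω
        simp [hω]
      -- condexp of αZ equals - condexp T
      have hdecomp : μ[fun ω' => α i * Z i ω' | 𝓕 (i - 1)]
          =ᵐ[μ] fun ω => - (μ[T i | 𝓕 (i - 1)]) ω := by
        have h1 : (fun ω' => α i * Z i ω') = (fun ω' => α i * X i ω') - T i := by
          funext ω; simp [hTdef]
        rw [h1]
        refine (condExp_sub hXi hTi (𝓕 (i - 1))).trans ?_
        filter_upwards [hXz] with ω hω
        simp [hω]
      -- bound |condexp T| by condexp |T| then by c i * v
      have habs : Integrable (fun ω => |T i ω|) μ := hTi.abs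
      have hub : μ[T i | 𝓕 (i - 1)] ≤ᵐ[μ] μ[fun ω => |T i ω| | 𝓕 (i - 1)] :=
        condExp_mono hTi habs (ae_of_all _ fun ω => le_abs_self _)
      have hlb : μ[fun ω => -|T i ω| | 𝓕 (i - 1)] ≤ᵐ[μ] μ[T i | 𝓕 (i - 1)] :=
        condExp_mono habs.neg hTi (ae_of_all _ fun ω => neg_abs_le _)
      have hneg : μ[fun ω => -|T i ω| | 𝓕 (i - 1)]
          =ᵐ[μ] fun ω => - (μ[fun ω => |T i ω| | 𝓕 (i - 1)]) ω := by
        have : (fun ω => -|T i ω|) = -(fun ω => |T i ω|) := by funext ω; simp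
        rw [this]
        exact condExp_neg _ (𝓕 (i - 1))
      have hmono2 : μ[fun ω => |T i ω| | 𝓕 (i - 1)]
          ≤ᵐ[μ] μ[fun ω => c i * |X i ω| ^ (1 + ε) | 𝓕 (i - 1)] :=
        condExp_mono habs hgi (ae_of_all _ fun ω => hTb i ω)
      have hgc : μ[fun ω => c i * |X i ω| ^ (1 + ε) | 𝓕 (i - 1)]
          =ᵐ[μ] fun ω => c i * (μ[fun ω' => |X i ω'| ^ (1 + ε) | 𝓕 (i - 1)]) ω := by
        have h1 : (fun ω => c i * |X i ω| ^ (1 + ε))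
            = c i • (fun ω => |X i ω| ^ (1 + ε)) := by
          funext ω; simp [smul_eq_mul]
        rw [h1]
        exact condExp_smul (c i) _ (𝓕 (i - 1))
      filter_upwards [hdecomp, hub, hlb, hneg, hmono2, hgc, hmom i hi]
        with ω h1 h2 h3 h4 h5 h6 h7
      rw [h1]
      rw [abs_neg, abs_le]
      have hbound : (μ[fun ω => |T i ω| | 𝓕 (i - 1)]) ω ≤ c i * v := by
        calc (μ[fun ω => |T i ω| | 𝓕 (i - 1)]) ω
            ≤ (μ[fun ω => c i * |X i ω| ^ (1 + ε) | 𝓕 (i - 1)]) ω := h5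
          _ = c i * (μ[fun ω' => |X i ω'| ^ (1 + ε) | 𝓕 (i - 1)]) ω := h6
          _ ≤ c i * v := mul_le_mul_of_nonneg_left h7 (hc0 i)
      constructor
      · calc -(c i * v) ≤ -((μ[fun ω => |T i ω| | 𝓕 (i - 1)]) ω) := by linarith
          _ = (μ[fun ω => -|T i ω| | 𝓕 (i - 1)]) ω := by rw [h4]
          _ ≤ (μ[T i | 𝓕 (i - 1)]) ω := h3
      · exact le_trans h2 hbound
    -- sum everything
    have hall : ∀ᵐ ω ∂μ, ∀ i ∈ Finset.Icc 1 n,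
        |(μ[fun ω' => α i * Z i ω' | 𝓕 (i - 1)]) ω| ≤ c i * v :=
      (Filter.eventually_all_finset _).2 hkey
    -- algebraic identity for the final constant
    have hSA : (∑ i ∈ Finset.Icc 1 n, |α i| ^ (1 + ε)) = A ^ (1 + ε) := by
      rw [hA]
      rw [← Real.rpow_mul hSnn, one_div, inv_mul_cancel₀ hεp.ne', Real.rpow_one]
    have hcv : ∑ i ∈ Finset.Icc 1 n, c i * v = v * C ^ (-ε) * A := by
      have h1 : ∑ i ∈ Finset.Icc 1 n, c i * v
          = (∑ i ∈ Finset.Icc 1 n, |α i| ^ (1 + ε)) * (v / B ^ ε) := by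
        rw [Finset.sum_mul]
        refine Finset.sum_congr rfl fun i _ => ?_
        rw [hcdef]; ring
      rw [h1, hSA, hBdef, Real.mul_rpow hC.le hA0, Real.rpow_neg hC.le,
        Real.rpow_add hApos, Real.rpow_one]
      have hAε : (0:ℝ) < A ^ ε := Real.rpow_pos_of_pos hApos ε
      have hCε : (0:ℝ) < C ^ ε := Real.rpow_pos_of_pos hC ε
      field_simp
    filter_upwards [hall] with ω hω
    calc |∑ i ∈ Finset.Icc 1 n, (μ[fun ω' => α i * Z i ω' | 𝓕 (i - 1)]) ω|
        ≤ ∑ i ∈ Finset.Icc 1 n, |(μ[fun ω' => α i * Z i ω' | 𝓕 (i - 1)]) ω| :=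
          Finset.abs_sum_le_sum_abs _ _
      _ ≤ ∑ i ∈ Finset.Icc 1 n, c i * v := Finset.sum_le_sum hω
      _ = v * C ^ (-ε) * A := hcv
end

section
/- Let ε ∈ (0,1], v > 0, C > 0, and let X₁,…,Xₙ satisfy E[|Xᵢ|^(1+ε) | F_{i-1}] ≤ v for a filtration (F_i). For fixed reals β₁,…,βₙ, set Zᵢ² = Xᵢ²·𝟙_{βᵢ²Xᵢ² ≤ C²‖β‖²_{1+ε}} where ‖β‖_{1+ε} = (Σᵢ|βᵢ|^(1+ε))^(1/(1+ε)). Then Σᵢ E[βᵢ²Zᵢ² | F_{i-1}] ≤ v·C^(1-ε)·‖β‖²_{1+ε}. -/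
open MeasureTheory Finset

theorem truncated_conditional_second_moment_bound
    {Ω : Type*} {m0 : MeasurableSpace Ω} (μ : Measure Ω) [IsProbabilityMeasure μ]
    (𝓕 : Filtration ℕ m0)
    (n : ℕ) (hn : 0 < n)
    (ε v C : ℝ) (hε : ε ∈ Set.Ioc (0 : ℝ) 1) (hv : 0 < v) (hC : 0 < C)
    (X : ℕ → Ω → ℝ) (β : ℕ → ℝ)
    (hmeas : ∀ i, Measurable (X i))
    (hmomint : ∀ i ∈ Finset.Icc 1 n, Integrable (fun ω => |X i ω| ^ (1 + ε)) μ)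
    (hmom : ∀ i ∈ Finset.Icc 1 n,
      ∀ᵐ ω ∂μ, (μ[fun ω' => |X i ω'| ^ (1 + ε) | 𝓕 (i - 1)]) ω ≤ v)
    (A : ℝ) (hA : A = (∑ i ∈ Finset.Icc 1 n, |β i| ^ (1 + ε)) ^ (1 / (1 + ε)))
    (Zsq : ℕ → Ω → ℝ)
    (hZsq : ∀ i ω, Zsq i ω =
      if β i ^ 2 * X i ω ^ 2 ≤ C ^ 2 * A ^ 2 then X i ω ^ 2 else 0) :
    ∀ᵐ ω ∂μ,
      ∑ i ∈ Finset.Icc 1 n, (μ[fun ω' => β i ^ 2 * Zsq i ω' | 𝓕 (i - 1)]) ω ≤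
        v * C ^ (1 - ε) * A ^ 2 := by
  obtain ⟨hε0, hε1⟩ := hε
  have hS : 0 ≤ ∑ i ∈ Finset.Icc 1 n, |β i| ^ (1 + ε) :=
    Finset.sum_nonneg fun i _ => Real.rpow_nonneg (abs_nonneg _) _
  have hA0 : 0 ≤ A := hA ▸ Real.rpow_nonneg hS _
  have hCA : 0 ≤ C * A := mul_nonneg hC.le hA0
  have h1ε : (1:ℝ) + ε ≠ 0 := by positivity
  have hApow : A ^ (1 + ε) = ∑ i ∈ Finset.Icc 1 n, |β i| ^ (1 + ε) := by
    rw [hA, ← Real.rpow_mul hS, one_div_mul_cancel h1ε, Real.rpow_one]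
  set K : ℕ → ℝ := fun i => |β i| ^ (1 + ε) * (C * A) ^ (1 - ε) with hK
  have hKnn : ∀ i, 0 ≤ K i := fun i =>
    mul_nonneg (Real.rpow_nonneg (abs_nonneg _) _) (Real.rpow_nonneg hCA _)
  -- pointwise bound
  have hpt : ∀ i ω, β i ^ 2 * Zsq i ω ≤ K i * |X i ω| ^ (1 + ε) := by
    intro i ω
    have hrhs : 0 ≤ K i * |X i ω| ^ (1 + ε) :=
      mul_nonneg (hKnn i) (Real.rpow_nonneg (abs_nonneg _) _)
    rw [hZsq]
    split_ifs with h
    · set b := |β i * X i ω| with hb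
      have hbnn : 0 ≤ b := abs_nonneg _
      have hb2 : β i ^ 2 * X i ω ^ 2 = b ^ 2 := by
        rw [hb, ← mul_pow, sq_abs]
      have hble : b ≤ C * A := by
        have h2 : b ^ 2 ≤ (C * A) ^ 2 := by rw [← hb2, mul_pow]; exact h
        nlinarith [h2, hbnn, hCA]
      rcases eq_or_lt_of_le hbnn with hb0 | hb0
      · rw [hb2, ← hb0]; simpa using hrhs
      · have hsplit : b ^ 2 = b ^ (1 + ε) * b ^ (1 - ε) := by
          rw [← Real.rpow_add hb0,
            show (1 + ε) + (1 - ε) = ((2:ℕ):ℝ) by push_cast; ring, Real.rpow_natCast]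
        have h1 : b ^ (1 + ε) = |β i| ^ (1 + ε) * |X i ω| ^ (1 + ε) := by
          rw [hb, abs_mul, Real.mul_rpow (abs_nonneg _) (abs_nonneg _)]
        have h2 : b ^ (1 - ε) ≤ (C * A) ^ (1 - ε) :=
          Real.rpow_le_rpow hbnn hble (by linarith)
        calc β i ^ 2 * X i ω ^ 2 = b ^ (1 + ε) * b ^ (1 - ε) := by rw [hb2, hsplit]
          _ ≤ b ^ (1 + ε) * (C * A) ^ (1 - ε) :=
              mul_le_mul_of_nonneg_left h2 (Real.rpow_nonneg hbnn _)
          _ = K i * |X i ω| ^ (1 + ε) := by rw [h1, hK]; ring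
    · simpa using hrhs
  -- measurability and integrability
  have hnnZ : ∀ i ω, 0 ≤ β i ^ 2 * Zsq i ω := by
    intro i ω; rw [hZsq]; split_ifs <;> positivity
  have hmeasZ : ∀ i, Measurable fun ω => β i ^ 2 * Zsq i ω := by
    intro i
    have : Measurable fun ω =>
        β i ^ 2 * (if β i ^ 2 * X i ω ^ 2 ≤ C ^ 2 * A ^ 2 then X i ω ^ 2 else 0) := by
      apply Measurable.const_mul
      exact Measurable.ite
        (measurableSet_le (((hmeas i).pow_const 2).const_mul _) measurable_const)
        ((hmeas i).pow_const 2) measurable_const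
    simpa only [← hZsq] using this
  have hint1 : ∀ i, Integrable (fun ω => β i ^ 2 * Zsq i ω) μ := by
    intro i
    refine (integrable_const (C ^ 2 * A ^ 2)).mono' (hmeasZ i).aestronglyMeasurable ?_
    filter_upwards with ω
    rw [Real.norm_eq_abs, abs_of_nonneg (hnnZ i ω), hZsq]
    split_ifs with h
    · exact h
    · rw [mul_zero]; positivity
  -- conditional expectation bound
  have hcond : ∀ i ∈ Finset.Icc 1 n, ∀ᵐ ω ∂μ,
      (μ[fun ω' => β i ^ 2 * Zsq i ω' | 𝓕 (i - 1)]) ω ≤ K i * v := by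
    intro i hi
    have h1 := condExp_mono (m := 𝓕 (i - 1)) (hint1 i)
      ((hmomint i hi).const_mul (K i)) (Filter.Eventually.of_forall (hpt i))
    have h2 : (μ[fun ω' => K i * |X i ω'| ^ (1 + ε) | 𝓕 (i - 1)]) =ᵐ[μ]
        fun ω => K i * (μ[fun ω' => |X i ω'| ^ (1 + ε) | 𝓕 (i - 1)]) ω := by
      simpa [smul_eq_mul, Pi.smul_def] using
        condExp_smul (μ := μ) (m := 𝓕 (i - 1)) (K i) (fun ω' => |X i ω'| ^ (1 + ε))
    filter_upwards [h1, h2, hmom i hi] with ω ha hb hc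
    calc (μ[fun ω' => β i ^ 2 * Zsq i ω' | 𝓕 (i - 1)]) ω
        ≤ (μ[fun ω' => K i * |X i ω'| ^ (1 + ε) | 𝓕 (i - 1)]) ω := ha
      _ = K i * (μ[fun ω' => |X i ω'| ^ (1 + ε) | 𝓕 (i - 1)]) ω := hb
      _ ≤ K i * v := mul_le_mul_of_nonneg_left hc (hKnn i)
  have hae : ∀ᵐ ω ∂μ, ∀ i ∈ Finset.Icc 1 n,
      (μ[fun ω' => β i ^ 2 * Zsq i ω' | 𝓕 (i - 1)]) ω ≤ K i * v :=
    (Filter.eventually_all_finset _).2 hcond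
  have hfin : ∑ i ∈ Finset.Icc 1 n, K i * v = v * C ^ (1 - ε) * A ^ 2 := by
    have hsum : ∑ i ∈ Finset.Icc 1 n, K i * v
        = A ^ (1 + ε) * ((C * A) ^ (1 - ε) * v) := by
      rw [hApow, Finset.sum_mul]
      exact Finset.sum_congr rfl fun i _ => by simp only [hK]; ring
    rw [hsum, Real.mul_rpow hC.le hA0]
    rcases eq_or_lt_of_le hA0 with hA0' | hA0'
    · rw [← hA0', Real.zero_rpow h1ε]; ring
    · have : A ^ (1 + ε) * A ^ (1 - ε) = A ^ 2 := by
        rw [← Real.rpow_add hA0',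
          show (1 + ε) + (1 - ε) = ((2:ℕ):ℝ) by push_cast; ring, Real.rpow_natCast]
      rw [show A ^ (1 + ε) * (C ^ (1 - ε) * A ^ (1 - ε) * v)
          = A ^ (1 + ε) * A ^ (1 - ε) * (C ^ (1 - ε) * v) from by ring, this]
      ring
  filter_upwards [hae] with ω hω
  calc ∑ i ∈ Finset.Icc 1 n, (μ[fun ω' => β i ^ 2 * Zsq i ω' | 𝓕 (i - 1)]) ω
      ≤ ∑ i ∈ Finset.Icc 1 n, K i * v := Finset.sum_le_sum hω
    _ = v * C ^ (1 - ε) * A ^ 2 := hfin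
end
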